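/- Let $x_1, x_2, y_1, y_2$ be independent random variables, each uniformly distributed on $[-D/2, D/2]$ with $D > 0$. Then $\Pr\big((x_1 - x_2)^2 + y_2^2 \le y_1^2\big) = \frac{2\pi - 1}{24}$. -/

import Mathlib

/-!
Integrate out the coordinates in the order x₂, x₁, y₂, y₁. For fixed y₁, y₂ put
t = √(y₁² - y₂²) (zero when y₂² > y₁²), so t ≤ D/2; the condition reads |x₁ - x₂| ≤ t, a band
of area 2Dt - t² in the square [-D/2, D/2]². Integrating over y₂, the term 2Dt contributes a
half-disc of radius |y₁| and t² = (y₁² - y₂²)⁺ a parabolic segment, giving π D y₁² - 4/3 |y₁|³; integrating this over y₁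
gives D⁴ (2π - 1)/24, and the normalisation D⁻⁴ removes D.
-/

open MeasureTheory Set

noncomputable def unif (D : ℝ) : Measure ℝ :=
  (ENNReal.ofReal D)⁻¹ • (volume.restrict (Set.Icc (-(D/2)) (D/2)))

open Real
open scoped ENNReal

lemma integral_eq_add_of_eqOn_Icc {f g k : ℝ → ℝ} {a b c : ℝ} (hab : a ≤ b) (hbc : b ≤ c)
    (hf : Continuous f) (hg : EqOn f g (Icc a b)) (hk : EqOn f k (Icc b c)) :
    ∫ x in a..c, f x = (∫ x in a..b, g x) + ∫ x in b..c, k x := by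
  rw [← intervalIntegral.integral_add_adjacent_intervals (hf.intervalIntegrable a b)
      (hf.intervalIntegrable b c),
    intervalIntegral.integral_congr (a := a) (g := g) (by rwa [uIcc_of_le hab]),
    intervalIntegral.integral_congr (a := b) (g := k) (by rwa [uIcc_of_le hbc])]

lemma integral_min_add_sub_max_sub {a b t : ℝ} (ht : 0 ≤ t) (htab : t ≤ b - a) :
    ∫ x in a..b, (min (x + t) b - max (x - t) a) = 2 * (b - a) * t - t ^ 2 := by
  have hmin : ∫ x in a..b, min (x + t) b = (∫ x in a..b - t, (x + t)) + ∫ _ in b - t..b, b :=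
    integral_eq_add_of_eqOn_Icc (f := fun x => min (x + t) b) (by linarith) (by linarith)
      (by fun_prop)
      (fun x hx => min_eq_left (by linarith [hx.2])) (fun x hx => min_eq_right (by linarith [hx.1]))
  have hmax : ∫ x in a..b, max (x - t) a = (∫ _ in a..a + t, a) + ∫ x in a + t..b, (x - t) :=
    integral_eq_add_of_eqOn_Icc (f := fun x => max (x - t) a) (by linarith) (by linarith)
      (by fun_prop)
      (fun x hx => max_eq_right (by linarith [hx.2])) (fun x hx => max_eq_left (by linarith [hx.1]))
  rw [intervalIntegral.integral_sub ((by fun_prop : Continuous _).intervalIntegrable _ _)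
    ((by fun_prop : Continuous _).intervalIntegrable _ _), hmin, hmax]
  simp only [intervalIntegral.intervalIntegrable_id, intervalIntegrable_const,
    intervalIntegral.integral_add, intervalIntegral.integral_sub, integral_id,
    intervalIntegral.integral_const, smul_eq_mul]
  ring

lemma integral_sqrt_sq_sub_sq {r : ℝ} (hr : 0 ≤ r) :
    ∫ y in -r..r, √(r ^ 2 - y ^ 2) = π / 2 * r ^ 2 := by
  rcases hr.eq_or_lt with rfl | hr
  · simp
  have hscale : ∀ x : ℝ, √(r ^ 2 - (r * x) ^ 2) = r * √(1 - x ^ 2) := fun x => by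
    rw [show r ^ 2 - (r * x) ^ 2 = r ^ 2 * (1 - x ^ 2) by ring, sqrt_mul (sq_nonneg r),
      sqrt_sq hr.le]
  have := intervalIntegral.integral_comp_mul_left (fun y => √(r ^ 2 - y ^ 2)) hr.ne'
    (a := -1) (b := 1)
  simp only [hscale, intervalIntegral.integral_const_mul, integral_sqrt_one_sub_sq, mul_neg,
    mul_one] at this
  rw [smul_eq_mul, eq_inv_mul_iff_mul_eq₀ hr.ne'] at this
  rw [← this]
  ring

lemma integral_abs_pow {h : ℝ} (hh : 0 ≤ h) (n : ℕ) :
    ∫ y in -h..h, |y| ^ n = 2 * h ^ (n + 1) / (n + 1) := by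
  rw [integral_eq_add_of_eqOn_Icc (g := fun y => (-y) ^ n) (k := fun y => y ^ n)
    (neg_nonpos.2 hh) hh (by fun_prop) (fun y hy => by simp [abs_of_nonpos hy.2])
    (fun y hy => by simp [abs_of_nonneg hy.1]), intervalIntegral.integral_comp_neg (fun y => y ^ n)]
  simp only [neg_zero, neg_neg, integral_pow, ne_eq, Nat.add_eq_zero_iff, one_ne_zero, and_false,
    not_false_eq_true, zero_pow, sub_zero]
  ring

lemma integral_mul_sqrt_sub_sqrt_sq (c : ℝ) {r h : ℝ} (hr : 0 ≤ r) (hrh : r ≤ h) :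
    ∫ y in -h..h, (c * √(r ^ 2 - y ^ 2) - √(r ^ 2 - y ^ 2) ^ 2) =
      c * π / 2 * r ^ 2 - 4 / 3 * r ^ 3 := by
  have hsupp : Function.support (fun y => c * √(r ^ 2 - y ^ 2) - √(r ^ 2 - y ^ 2) ^ 2) ⊆
      Ioc (-r) r := by
    refine Function.support_subset_iff'.2 fun y hy => ?_
    have : r ^ 2 - y ^ 2 ≤ 0 := by
      rw [mem_Ioc, not_and_or, not_lt, not_le] at hy
      rcases hy with hy | hy <;> nlinarith
    simp [sqrt_eq_zero'.2 this]
  rw [intervalIntegral.integral_eq_integral_of_support_subset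
      (hsupp.trans (Ioc_subset_Ioc (neg_le_neg hrh) hrh)),
    ← intervalIntegral.integral_eq_integral_of_support_subset hsupp,
    intervalIntegral.integral_congr (g := fun y => c * √(r ^ 2 - y ^ 2) - (r ^ 2 - y ^ 2))
      fun y hy => by
        rw [uIcc_of_le (by linarith), mem_Icc] at hy
        simp only [sq_sqrt (by nlinarith : 0 ≤ r ^ 2 - y ^ 2)]]
  rw [intervalIntegral.integral_sub ((by fun_prop : Continuous _).intervalIntegrable _ _)
    ((by fun_prop : Continuous _).intervalIntegrable _ _), intervalIntegral.integral_const_mul,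
    integral_sqrt_sq_sub_sq hr]
  simp only [intervalIntegrable_const, intervalIntegral.intervalIntegrable_pow,
    intervalIntegral.integral_sub, intervalIntegral.integral_const, smul_eq_mul, integral_pow]
  ring

instance (D : ℝ) : SFinite (unif D) := by
  unfold unif; infer_instance

lemma lintegral_unif_eq_ofReal {D : ℝ} (hD : 0 < D) {g : ℝ → ℝ≥0∞} {f : ℝ → ℝ}
    (hf : Continuous f) (hf0 : ∀ x ∈ Icc (-(D / 2)) (D / 2), 0 ≤ f x)
    (hgf : EqOn g (fun x => ENNReal.ofReal (f x)) (Icc (-(D / 2)) (D / 2))) :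
    ∫⁻ x, g x ∂unif D = ENNReal.ofReal ((∫ x in -(D / 2)..D / 2, f x) / D) := by
  rw [unif, lintegral_smul_measure, setLIntegral_congr_fun measurableSet_Icc hgf,
    ← ofReal_integral_eq_lintegral_ofReal hf.integrableOn_Icc
      ((ae_restrict_iff' measurableSet_Icc).2 (ae_of_all _ hf0)),
    integral_Icc_eq_integral_Ioc, ← intervalIntegral.integral_of_le (by linarith), smul_eq_mul,
    ENNReal.ofReal_div_of_pos hD, ENNReal.div_eq_inv_mul]

lemma volume_setOf_sq_sub_le_inter_Icc {a b x : ℝ} (hx : x ∈ Icc a b) (s : ℝ) :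
    volume ({y | (x - y) ^ 2 ≤ s} ∩ Icc a b) =
      ENNReal.ofReal (min (x + √s) b - max (x - √s) a) := by
  rcases le_or_gt 0 s with hs | hs
  · have : {y | (x - y) ^ 2 ≤ s} = Icc (x - √s) (x + √s) := by
      ext y
      rw [mem_Icc, show y ∈ {y | (x - y) ^ 2 ≤ s} ↔ _ from Real.sq_le hs]
      constructor <;> intro h <;> constructor <;> linarith [h.1, h.2]
    rw [this, Icc_inter_Icc, volume_Icc]
  · have : {y | (x - y) ^ 2 ≤ s} = ∅ :=
      eq_empty_of_forall_notMem fun y hy => (lt_of_lt_of_le hs (sq_nonneg (x - y))).not_ge hy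
    rw [this, empty_inter, measure_empty, sqrt_eq_zero'.2 hs.le, add_zero, sub_zero,
      min_eq_left hx.2, max_eq_left hx.1, sub_self, ENNReal.ofReal_zero]

lemma unif_setOf_sq_sub_le {D : ℝ} (hD : 0 < D) {x : ℝ} (hx : x ∈ Icc (-(D / 2)) (D / 2))
    (s : ℝ) :
    unif D {y | (x - y) ^ 2 ≤ s} =
      ENNReal.ofReal ((min (x + √s) (D / 2) - max (x - √s) (-(D / 2))) / D) := by
  rw [unif, Measure.smul_apply,
    Measure.restrict_apply (measurableSet_le (by fun_prop) (by fun_prop)),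
    volume_setOf_sq_sub_le_inter_Icc hx, smul_eq_mul, ENNReal.ofReal_div_of_pos hD,
    ENNReal.div_eq_inv_mul]

lemma unif_prod_unif_setOf_sq_sub_le {D : ℝ} (hD : 0 < D) {s : ℝ} (hs : s ≤ D ^ 2) :
    (unif D).prod (unif D) {q : ℝ × ℝ | (q.1 - q.2) ^ 2 ≤ s} =
      ENNReal.ofReal ((2 * D * √s - √s ^ 2) / D ^ 2) := by
  have ht : √s ≤ D := (sqrt_le_sqrt hs).trans_eq (sqrt_sq hD.le)
  have hlen : ∀ x ∈ Icc (-(D / 2)) (D / 2),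
      0 ≤ (min (x + √s) (D / 2) - max (x - √s) (-(D / 2))) / D :=
    fun x hx => div_nonneg (sub_nonneg.2 ((max_le (by linarith [sqrt_nonneg s]) hx.1).trans
      (le_min (by linarith [sqrt_nonneg s]) hx.2))) hD.le
  rw [Measure.prod_apply (measurableSet_le (by fun_prop) (by fun_prop))]
  simp only [preimage_ofPred_eq]
  rw [lintegral_unif_eq_ofReal hD (by fun_prop) hlen fun x hx => unif_setOf_sq_sub_le hD hx s,
    intervalIntegral.integral_div, integral_min_add_sub_max_sub (sqrt_nonneg s) (by linarith)]
  congr 1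
  field_simp
  ring

lemma unif_prod_setOf_sq_sub_le_sq_sub_sq {D : ℝ} (hD : 0 < D) {y : ℝ} (hy : |y| ≤ D / 2) :
    (unif D).prod ((unif D).prod (unif D))
        {q : ℝ × ℝ × ℝ | (q.2.1 - q.2.2) ^ 2 ≤ y ^ 2 - q.1 ^ 2} =
      ENNReal.ofReal ((π * D * y ^ 2 - 4 / 3 * |y| ^ 3) / D ^ 3) := by
  have hchord : ∀ z, √(y ^ 2 - z ^ 2) ≤ D / 2 := fun z =>
    ((sqrt_le_sqrt (sub_le_self _ (sq_nonneg z))).trans_eq (sqrt_sq_eq_abs y)).trans hy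
  have hs : ∀ z, y ^ 2 - z ^ 2 ≤ D ^ 2 := fun z => by
    nlinarith [sq_abs y, abs_nonneg y, sq_nonneg z]
  have hband : ∀ z, 0 ≤ (2 * D * √(y ^ 2 - z ^ 2) - √(y ^ 2 - z ^ 2) ^ 2) / D ^ 2 :=
    fun z => div_nonneg (by nlinarith [sqrt_nonneg (y ^ 2 - z ^ 2), hchord z]) (by positivity)
  rw [Measure.prod_apply (measurableSet_le (by fun_prop) (by fun_prop))]
  simp only [preimage_ofPred_eq]
  rw [lintegral_unif_eq_ofReal hD (by fun_prop) (fun z _ => hband z)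
      fun z _ => unif_prod_unif_setOf_sq_sub_le hD (hs z),
    intervalIntegral.integral_div, ← sq_abs y,
    integral_mul_sqrt_sub_sqrt_sq (2 * D) (abs_nonneg y) hy]
  congr 1
  field_simp

lemma integral_pi_mul_sq_sub_abs_pow_three {D : ℝ} (hD : 0 < D) :
    ∫ y in -(D / 2)..D / 2, (π * D * y ^ 2 - 4 / 3 * |y| ^ 3) = D ^ 4 * (2 * π - 1) / 24 := by
  rw [intervalIntegral.integral_sub ((by fun_prop : Continuous _).intervalIntegrable _ _)
      ((by fun_prop : Continuous _).intervalIntegrable _ _),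
    intervalIntegral.integral_const_mul, intervalIntegral.integral_const_mul,
    integral_abs_pow (by positivity) 3, integral_pow]
  ring

lemma pi_mul_sq_sub_abs_pow_three_nonneg {D y : ℝ} (hD : 0 < D) (hy : |y| ≤ D / 2) :
    0 ≤ π * D * y ^ 2 - 4 / 3 * |y| ^ 3 := by
  have hcube : |y| ^ 3 ≤ D / 2 * y ^ 2 := by
    rw [← sq_abs y, pow_succ']
    exact mul_le_mul_of_nonneg_right hy (sq_nonneg _)
  nlinarith [pi_gt_three, mul_nonneg hD.le (sq_nonneg y)]

lemma measurePreserving_swap_pairs {α β γ δ : Type*} [MeasurableSpace α] [MeasurableSpace β]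
    [MeasurableSpace γ] [MeasurableSpace δ] (μ : Measure α) (ν : Measure β) (ρ : Measure γ)
    (τ : Measure δ) [SFinite μ] [SFinite ν] [SFinite ρ] [SFinite τ] :
    MeasurePreserving (fun p : α × β × γ × δ => (p.2.2.1, p.2.2.2, p.1, p.2.1))
      (μ.prod (ν.prod (ρ.prod τ))) (ρ.prod (τ.prod (μ.prod ν))) :=
  (measurePreserving_prodAssoc ρ τ (μ.prod ν)).comp (Measure.measurePreserving_swap.comp
    ((measurePreserving_prodAssoc μ ν (ρ.prod τ)).symm MeasurableEquiv.prodAssoc))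

/-- With x₁, x₂, y₁, y₂ independent uniform on [-D/2, D/2],
Pr((x₁-x₂)² + y₂² ≤ y₁²) = (2π-1)/24. -/
theorem stmt_9 (D : ℝ) (hD : 0 < D) :
    ((unif D).prod ((unif D).prod ((unif D).prod (unif D))))
      {p : ℝ × ℝ × ℝ × ℝ |
        (p.1 - p.2.1) ^ 2 + p.2.2.2 ^ 2 ≤ p.2.2.1 ^ 2} =
      ENNReal.ofReal ((2 * Real.pi - 1) / 24) := by
  have hS : MeasurableSet {q : ℝ × ℝ × ℝ × ℝ | (q.2.2.1 - q.2.2.2) ^ 2 ≤ q.1 ^ 2 - q.2.1 ^ 2} :=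
    measurableSet_le (by fun_prop) (by fun_prop)
  have hpre : (fun p : ℝ × ℝ × ℝ × ℝ => (p.2.2.1, p.2.2.2, p.1, p.2.1)) ⁻¹'
        {q | (q.2.2.1 - q.2.2.2) ^ 2 ≤ q.1 ^ 2 - q.2.1 ^ 2} =
      {p | (p.1 - p.2.1) ^ 2 + p.2.2.2 ^ 2 ≤ p.2.2.1 ^ 2} := by
    ext
    simp [le_sub_iff_add_le]
  have hslice : ∀ y ∈ Icc (-(D / 2)) (D / 2), 0 ≤ (π * D * y ^ 2 - 4 / 3 * |y| ^ 3) / D ^ 3 :=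
    fun y hy => div_nonneg (pi_mul_sq_sub_abs_pow_three_nonneg hD (abs_le.2 hy)) (by positivity)
  rw [← hpre, (measurePreserving_swap_pairs _ _ _ _).measure_preimage hS.nullMeasurableSet,
    Measure.prod_apply hS]
  simp only [preimage_ofPred_eq]
  rw [lintegral_unif_eq_ofReal hD (by fun_prop) hslice
      fun y hy => unif_prod_setOf_sq_sub_le_sq_sub_sq hD (abs_le.2 hy),
    intervalIntegral.integral_div, integral_pi_mul_sq_sub_abs_pow_three hD]
  congr 1
  field_simp
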